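/- arXiv:2103.14861 — 4 statements merged into one kernel-verified Lean document; each statement's English description precedes it below -/
import Mathlib

section
/- In the continued fraction expansion of √N with complete quotients (√N + c_n)/r_n, for all n ≥ 1 one has a_0 - c_n < r_n ≤ 2·a_0, where a_0 = ⌊√N⌋; moreover c_n ≤ a_0 and a_n ≤ 2·a_0 for all n ≥ 1. -/
/-!
Write `q = ⌊√N⌋`, so `q² < N ≤ q² + 2q`. The complete quotients `(√N + cₙ)/rₙ` are reduced: in
integers, `cₙ ≤ q` and `q - cₙ < rₙ ≤ q + cₙ`, and moreover `rₙ ∣ N - cₙ²`. This is preserved by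
one step of the algorithm: with `s = (q + c) mod r` the next quotient has `c' = q - s`, and the
exact identity `r' r = N - (q - s)²`, compared with `q² < N ≤ q² + 2q`, pins `r'` between `s` and
`2q - s`. The stated bounds for `n ≥ 1` then follow from `r ≤ q + c ≤ 2q` and `a' ≤ q + c`.
-/

section ReducedQuotient

variable {q N c r s r' : ℤ}

/-- For `q = ⌊√N⌋` with `N` not a square, `(√N + c) / r` is a reduced quadratic irrational (it
exceeds `1` and its conjugate lies in `(-1, 0)`) exactly when the three inequalities hold. -/
structure IsReducedQuotient (q N c r : ℤ) : Prop where
  le_floor : c ≤ q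
  floor_sub_lt : q - c < r
  le_floor_add : r ≤ q + c
  dvd : r ∣ N - c ^ 2

theorem IsReducedQuotient.pos (h : IsReducedQuotient q N c r) : 0 < r := by
  linarith [h.le_floor, h.floor_sub_lt]

theorem lt_of_mul_eq_sub_floor_sub_sq (hlo : q ^ 2 < N) (hs : 0 ≤ s) (hr : 0 < r)
    (hrs : r + s ≤ 2 * q) (h : r' * r = N - (q - s) ^ 2) : s < r' := by
  refine lt_of_mul_lt_mul_right (a := r) ?_ hr.le
  have : 0 ≤ s * (2 * q - s - r) := mul_nonneg hs (by linarith)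
  nlinarith

theorem le_of_mul_eq_sub_floor_sub_sq (hhi : N ≤ q ^ 2 + 2 * q) (hs : 0 ≤ s) (hsr : s < r)
    (hrs : r + s ≤ 2 * q) (h : r' * r = N - (q - s) ^ 2) : r' ≤ 2 * q - s := by
  have : 0 ≤ (2 * q - s + 1) * (r - s - 1) := mul_nonneg (by linarith) (by linarith)
  have : r' * r < (2 * q - s + 1) * r := by nlinarith
  linarith [lt_of_mul_lt_mul_right this (by linarith : (0 : ℤ) ≤ r)]

theorem IsReducedQuotient.le_two_mul (h : IsReducedQuotient q N c r) : r ≤ 2 * q := by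
  linarith [h.le_floor_add, h.le_floor]

theorem IsReducedQuotient.ediv_le_two_mul (h : IsReducedQuotient q N c r) :
    (q + c) / r ≤ 2 * q :=
  (Int.ediv_le_self _ (by linarith [h.le_floor_add, h.pos])).trans (by linarith [h.le_floor])

theorem isReducedQuotient_initial (hlo : q ^ 2 < N) (hhi : N ≤ q ^ 2 + 2 * q) :
    IsReducedQuotient q N q (N - q ^ 2) :=
  ⟨le_rfl, by linarith, by linarith, dvd_rfl⟩

theorem IsReducedQuotient.next (hlo : q ^ 2 < N) (hhi : N ≤ q ^ 2 + 2 * q)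
    (h : IsReducedQuotient q N c r) :
    IsReducedQuotient q N ((q + c) / r * r - c) ((N - ((q + c) / r * r - c) ^ 2) / r) := by
  have hr := h.pos
  set s := (q + c) % r
  have hs : 0 ≤ s := Int.emod_nonneg _ hr.ne'
  have hsr : s < r := Int.emod_lt_of_pos _ hr
  have hc' : (q + c) / r * r - c = q - s := by linear_combination Int.emod_def (q + c) r
  -- the partial quotient `(q + c) / r` is at least `1`, so `s ≤ q + c - r`
  have hrs : r + s ≤ 2 * q := by
    have : 1 ≤ (q + c) / r := (Int.le_ediv_iff_mul_le hr).2 (by linarith [h.le_floor_add])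
    have : r ≤ (q + c) / r * r := le_mul_of_one_le_left hr.le this
    linarith [h.le_floor, hc']
  have hdvd : r ∣ N - (q - s) ^ 2 := by
    rw [← hc']
    have : N - ((q + c) / r * r - c) ^ 2
        = N - c ^ 2 + r * ((q + c) / r * (2 * c - (q + c) / r * r)) := by ring
    rw [this]
    exact dvd_add h.dvd (dvd_mul_right _ _)
  rw [hc']
  have hr' : (N - (q - s) ^ 2) / r * r = N - (q - s) ^ 2 := Int.ediv_mul_cancel hdvd
  refine ⟨by linarith, ?_, ?_, ⟨r, hr'.symm⟩⟩
  · linarith [lt_of_mul_eq_sub_floor_sub_sq hlo hs hr hrs hr']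
  · linarith [le_of_mul_eq_sub_floor_sub_sq hhi hs hsr hrs hr']

theorem isReducedQuotient_of_recursion (hlo : q ^ 2 < N) (hhi : N ≤ q ^ 2 + 2 * q)
    (a c r : ℕ → ℤ) (hc0 : c 0 = q) (hr0 : r 0 = N - q ^ 2)
    (ha : ∀ m, a (m + 1) = (q + c m).fdiv (r m))
    (hc : ∀ m, c (m + 1) = a (m + 1) * r m - c m)
    (hr : ∀ m, r (m + 1) = (N - c (m + 1) ^ 2).fdiv (r m)) :
    ∀ n, IsReducedQuotient q N (c n) (r n)
  | 0 => by rw [hc0, hr0]; exact isReducedQuotient_initial hlo hhi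
  | m + 1 => by
    have ih := isReducedQuotient_of_recursion hlo hhi a c r hc0 hr0 ha hc hr m
    have hcm : c (m + 1) = (q + c m) / r m * r m - c m := by
      rw [hc, ha, Int.fdiv_eq_ediv_of_nonneg _ ih.pos.le]
    rw [hr, Int.fdiv_eq_ediv_of_nonneg _ ih.pos.le, hcm]
    exact ih.next hlo hhi

end ReducedQuotient

theorem Nat.sqrt_sq_lt_of_not_isSquare {N : ℕ} (hN : ¬IsSquare N) :
    (Nat.sqrt N : ℤ) ^ 2 < N := by
  have hlt := (Nat.sqrt_le N).lt_of_ne fun h => hN ⟨_, h.symm⟩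
  rw [sq]
  exact_mod_cast hlt

theorem Nat.le_sqrt_sq_add_two_mul_sqrt (N : ℕ) :
    (N : ℤ) ≤ (Nat.sqrt N : ℤ) ^ 2 + 2 * Nat.sqrt N := by
  have := Nat.sqrt_le_add N
  push_cast [sq]
  omega

theorem stmt_6_general
(N : ℕ) (hns : ¬ IsSquare N)
    (a c r : ℕ → ℤ)
    (ha0 : a 0 = (Nat.sqrt N : ℤ)) (hc0 : c 0 = a 0) (hr0 : r 0 = (N : ℤ) - a 0 ^ 2)
    (ha : ∀ m, a (m + 1) = (a 0 + c m).fdiv (r m))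
    (hc : ∀ m, c (m + 1) = a (m + 1) * r m - c m)
    (hr : ∀ m, r (m + 1) = ((N : ℤ) - c (m + 1) ^ 2).fdiv (r m)) :
    ∀ n, 1 ≤ n → a 0 - c n < r n ∧ r n ≤ 2 * a 0 ∧ c n ≤ a 0 ∧ a n ≤ 2 * a 0 := by
  have hlo : a 0 ^ 2 < N := ha0 ▸ Nat.sqrt_sq_lt_of_not_isSquare hns
  have hhi : N ≤ a 0 ^ 2 + 2 * a 0 := ha0 ▸ Nat.le_sqrt_sq_add_two_mul_sqrt N
  have hred := isReducedQuotient_of_recursion hlo hhi a c r hc0 hr0 ha hc hr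
  intro n hn
  obtain ⟨m, rfl⟩ := Nat.exists_eq_add_of_le' hn
  have hm := hred m
  have hm' := hred (m + 1)
  rw [ha, Int.fdiv_eq_ediv_of_nonneg _ hm.pos.le]
  exact ⟨hm'.floor_sub_lt, hm'.le_two_mul, hm'.le_floor, hm.ediv_le_two_mul⟩

theorem stmt_6
(N : ℕ) (hN : 0 < N) (hns : ¬ IsSquare N)
    (a c r : ℕ → ℤ)
    (ha0 : a 0 = (Nat.sqrt N : ℤ)) (hc0 : c 0 = a 0) (hr0 : r 0 = (N : ℤ) - a 0 ^ 2)
    (ha : ∀ m, a (m + 1) = (a 0 + c m).fdiv (r m))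
    (hc : ∀ m, c (m + 1) = a (m + 1) * r m - c m)
    (hr : ∀ m, r (m + 1) = ((N : ℤ) - c (m + 1) ^ 2).fdiv (r m)) :
    ∀ n, 1 ≤ n → a 0 - c n < r n ∧ r n ≤ 2 * a 0 ∧ c n ≤ a 0 ∧ a n ≤ 2 * a 0 :=
  stmt_6_general N hns a c r ha0 hc0 hr0 ha hc hr
end

section
/- If N is a squarefree positive integer such that the Pell equation x² - N·y² = -1 has an integer solution, then N is a sum of two squares. -/
theorem ZMod.isSquare_neg_one_of_sq_sub_mul_sq_eq_neg_one {N : ℕ} {x y : ℤ}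
    (h : x ^ 2 - (N : ℤ) * y ^ 2 = -1) : IsSquare (-1 : ZMod N) := by
  refine ⟨x, ?_⟩
  have hmod := congrArg (Int.cast : ℤ → ZMod N) h
  push_cast [ZMod.natCast_self] at hmod
  linear_combination -hmod

theorem stmt_9_general (N : ℕ)
    (x y : ℤ) (hxy : x ^ 2 - (N : ℤ) * y ^ 2 = -1) :
    ∃ a b : ℕ, N = a ^ 2 + b ^ 2 :=
  Nat.eq_sq_add_sq_of_isSquare_mod_neg_one (ZMod.isSquare_neg_one_of_sq_sub_mul_sq_eq_neg_one hxy)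

theorem stmt_9 (N : ℕ) (hN : 0 < N) (hsf : Squarefree N)
    (x y : ℤ) (hxy : x ^ 2 - (N : ℤ) * y ^ 2 = -1) :
    ∃ a b : ℕ, N = a ^ 2 + b ^ 2 :=
  stmt_9_general N x y hxy
end

section
/- The sequences Δ_m = A_m² - N·B_m² and Ω_m = A_m·A_{m-1} - N·B_m·B_{m-1} are periodic (for m ≥ 1) with period τ if the period τ of the continued fraction of √N is even, and with period 2τ if τ is odd. -/
/-!
By induction, `Δ_m = (-1)^(m+1) r_m` and `Ω_m = (-1)^m c_m` for `m ≥ 1`. The `Ω`-step is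
linear in the recurrences; the `Δ`-step follows from the Brahmagupta identity
`Δ_{m+1} Δ_m = Ω_{m+1}^2 - N (A_{m+1} B_m - A_m B_{m+1})^2 = Ω_{m+1}^2 - N`, and `r_m ≠ 0`
because `N` is not a square, so the division defining `r_{m+1}` is exact. Hence `Δ` and `Ω`
inherit every even period of `(c_m, r_m)`, i.e. `τ` if `τ` is even and `2τ` in any case.
-/

theorem sq_sub_mul_sq_ne_zero {N : ℤ} (hN : ¬IsSquare N) {x y : ℤ} (hxy : x ≠ 0 ∨ y ≠ 0) :
    x ^ 2 - N * y ^ 2 ≠ 0 := by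
  intro h
  rcases eq_or_ne y 0 with rfl | hy
  · simp_all
  · refine hN (Rat.isSquare_intCast_iff.mp ⟨x / y, ?_⟩)
    have hy' : (y : ℚ) ≠ 0 := by exact_mod_cast hy
    field_simp
    exact_mod_cast (by linear_combination h : x ^ 2 = N * y ^ 2).symm

theorem convergent_det {a A B : ℕ → ℤ}
    (hArec : ∀ n, A (n + 2) = a (n + 2) * A (n + 1) + A n)
    (hBrec : ∀ n, B (n + 2) = a (n + 2) * B (n + 1) + B n) (n : ℕ) :
    A (n + 1) * B n - A n * B (n + 1) = (-1) ^ n * (A 1 * B 0 - A 0 * B 1) := by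
  induction n with
  | zero => ring
  | succ n ih => rw [hArec, hBrec, pow_succ]; linear_combination -ih

theorem sq_sub_mul_sq_step {N : ℤ} (hN : ¬IsSquare N) {a c r σ x₀ y₀ x₁ y₁ x₂ y₂ : ℤ}
    (hσ : σ ^ 2 = 1) (hdet : (x₁ * y₀ - x₀ * y₁) ^ 2 = 1)
    (hx₂ : x₂ = a * x₁ + x₀) (hy₂ : y₂ = a * y₁ + y₀)
    (hnorm : x₁ ^ 2 - N * y₁ ^ 2 = σ * r) (hcross : x₁ * x₀ - N * y₁ * y₀ = -σ * c) :
    x₂ ^ 2 - N * y₂ ^ 2 = -σ * ((N - (a * r - c) ^ 2).fdiv r) ∧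
      x₂ * x₁ - N * y₂ * y₁ = σ * (a * r - c) := by
  have hcross₂ : x₂ * x₁ - N * y₂ * y₁ = σ * (a * r - c) := by
    rw [hx₂, hy₂]; linear_combination a * hnorm + hcross
  have hr : r ≠ 0 := by
    rintro rfl
    refine sq_sub_mul_sq_ne_zero hN ?_ (by simpa using hnorm)
    by_contra! h
    simp [h.1, h.2] at hdet
  have hmul : (x₂ ^ 2 - N * y₂ ^ 2) * (x₁ ^ 2 - N * y₁ ^ 2)
      = (x₂ * x₁ - N * y₂ * y₁) ^ 2 - N * (x₁ * y₀ - x₀ * y₁) ^ 2 := by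
    rw [hx₂, hy₂]; ring
  rw [hdet, hcross₂, hnorm] at hmul
  refine ⟨?_, hcross₂⟩
  have : N - (a * r - c) ^ 2 = r * (-σ * (x₂ ^ 2 - N * y₂ ^ 2)) := by
    linear_combination hmul + (a * r - c) ^ 2 * hσ
  rw [this, Int.mul_fdiv_cancel_left _ hr]
  linear_combination (-(x₂ ^ 2 - N * y₂ ^ 2)) * hσ

theorem sq_sub_mul_sq_eq_neg_one_pow_mul {N : ℤ} (hN : ¬IsSquare N) {a c r A B : ℕ → ℤ}
    (hc0 : c 0 = a 0) (hr0 : r 0 = N - a 0 ^ 2)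
    (hc : ∀ m, c (m + 1) = a (m + 1) * r m - c m)
    (hr : ∀ m, r (m + 1) = (N - c (m + 1) ^ 2).fdiv (r m))
    (hA0 : A 0 = a 0) (hB0 : B 0 = 1) (hA1 : A 1 = a 1 * a 0 + 1) (hB1 : B 1 = a 1)
    (hArec : ∀ n, A (n + 2) = a (n + 2) * A (n + 1) + A n)
    (hBrec : ∀ n, B (n + 2) = a (n + 2) * B (n + 1) + B n) (n : ℕ) :
    A (n + 1) ^ 2 - N * B (n + 1) ^ 2 = (-1) ^ n * r (n + 1) ∧
      A (n + 1) * A n - N * B (n + 1) * B n = (-1) ^ (n + 1) * c (n + 1) := by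
  induction n with
  | zero =>
    -- `(A₀, B₀)` is preceded by the virtual convergent `(1, 0)`
    have := sq_sub_mul_sq_step hN (σ := -1) (x₀ := 1) (y₀ := 0) (x₁ := A 0) (y₁ := B 0)
      (x₂ := A 1) (y₂ := B 1) (a := a 1) (c := c 0) (r := r 0)
      (by norm_num) (by simp [hB0]) (by rw [hA1, hA0]) (by rw [hB1, hB0]; ring)
      (by rw [hA0, hB0, hr0]; ring) (by rw [hA0, hc0]; ring)
    rw [hr 0, hc 0]
    exact ⟨by linear_combination this.1, by linear_combination this.2⟩
  | succ n ih =>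
    have hdet := convergent_det hArec hBrec n
    rw [hA1, hB1, hA0, hB0] at hdet
    have := sq_sub_mul_sq_step hN (σ := (-1) ^ n) (a := a (n + 2))
      (by rw [← pow_mul, pow_mul']; simp)
      (by rw [hdet, mul_pow, ← pow_mul, pow_mul']; ring) (hArec n) (hBrec n) ih.1
      (by rw [ih.2]; ring)
    rw [hr (n + 1), hc (n + 1)]
    exact ⟨by linear_combination this.1, by linear_combination this.2⟩

theorem Function.Periodic.neg_one_pow_mul {R : Type*} [Monoid R] [HasDistribNeg R] {f : ℕ → R}
    {t : ℕ} (hf : Function.Periodic f t) (ht : Even t) :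
    Function.Periodic (fun n => (-1) ^ n * f n) t := fun n => by
  simp only [pow_add, ht.neg_one_pow, mul_one, hf n]

theorem stmt_11_general
(N : ℕ) (hns : ¬ IsSquare N)
    (a c r : ℕ → ℤ)
    (hc0 : c 0 = a 0) (hr0 : r 0 = (N : ℤ) - a 0 ^ 2)
    (hc : ∀ m, c (m + 1) = a (m + 1) * r m - c m)
    (hr : ∀ m, r (m + 1) = ((N : ℤ) - c (m + 1) ^ 2).fdiv (r m))
(A B : ℕ → ℤ)
    (hA0 : A 0 = a 0) (hB0 : B 0 = 1)
    (hA1 : A 1 = a 1 * a 0 + 1) (hB1 : B 1 = a 1)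
    (hArec : ∀ n, A (n + 2) = a (n + 2) * A (n + 1) + A n)
    (hBrec : ∀ n, B (n + 2) = a (n + 2) * B (n + 1) + B n)
(Δ Ω : ℕ → ℤ)
    (hΔ : ∀ m, Δ m = A m ^ 2 - (N : ℤ) * B m ^ 2)
    (hΩ : ∀ m, 1 ≤ m → Ω m = A m * A (m - 1) - (N : ℤ) * B m * B (m - 1))
(τ : ℕ)
    (hper : ∀ n, 1 ≤ n → a (n + τ) = a n ∧ c (n + τ) = c n ∧ r (n + τ) = r n) :
    (Even τ → ∀ m, 1 ≤ m → Δ (m + τ) = Δ m ∧ Ω (m + τ) = Ω m) ∧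
    (Odd τ → ∀ m, 1 ≤ m → Δ (m + 2 * τ) = Δ m ∧ Ω (m + 2 * τ) = Ω m) := by
  have hform := sq_sub_mul_sq_eq_neg_one_pow_mul (Int.isSquare_natCast_iff.not.mpr hns)
    hc0 hr0 hc hr hA0 hB0 hA1 hB1 hArec hBrec
  have hΔr (n : ℕ) : Δ (n + 1) = (-1) ^ n * r (n + 1) := (hΔ _).trans (hform n).1
  have hΩc (n : ℕ) : Ω (n + 1) = -((-1) ^ n * c (n + 1)) := by
    rw [hΩ (n + 1) (Nat.le_add_left 1 n), Nat.add_sub_cancel, (hform n).2]; ring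
  have hperiodic (t : ℕ) (ht : Even t) (hct : Function.Periodic (fun n => c (n + 1)) t)
      (hrt : Function.Periodic (fun n => r (n + 1)) t) :
      ∀ m, 1 ≤ m → Δ (m + t) = Δ m ∧ Ω (m + t) = Ω m := by
    intro m hm
    obtain ⟨n, rfl⟩ := Nat.exists_eq_add_of_le' hm
    rw [add_right_comm, hΔr, hΔr, hΩc, hΩc]
    exact ⟨hrt.neg_one_pow_mul ht n, congrArg Neg.neg (hct.neg_one_pow_mul ht n)⟩
  have hcτ : Function.Periodic (fun n => c (n + 1)) τ := fun n => by
    simpa only [add_right_comm] using (hper (n + 1) (Nat.le_add_left 1 n)).2.1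
  have hrτ : Function.Periodic (fun n => r (n + 1)) τ := fun n => by
    simpa only [add_right_comm] using (hper (n + 1) (Nat.le_add_left 1 n)).2.2
  exact ⟨fun hτ => hperiodic τ hτ hcτ hrτ, fun _ =>
    hperiodic (2 * τ) (even_two_mul τ) (hcτ.nat_mul 2) (hrτ.nat_mul 2)⟩

theorem stmt_11
(N : ℕ) (hN : 0 < N) (hns : ¬ IsSquare N)
    (a c r : ℕ → ℤ)
    (ha0 : a 0 = (Nat.sqrt N : ℤ)) (hc0 : c 0 = a 0) (hr0 : r 0 = (N : ℤ) - a 0 ^ 2)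
    (ha : ∀ m, a (m + 1) = (a 0 + c m).fdiv (r m))
    (hc : ∀ m, c (m + 1) = a (m + 1) * r m - c m)
    (hr : ∀ m, r (m + 1) = ((N : ℤ) - c (m + 1) ^ 2).fdiv (r m))
(A B : ℕ → ℤ)
    (hA0 : A 0 = a 0) (hB0 : B 0 = 1)
    (hA1 : A 1 = a 1 * a 0 + 1) (hB1 : B 1 = a 1)
    (hArec : ∀ n, A (n + 2) = a (n + 2) * A (n + 1) + A n)
    (hBrec : ∀ n, B (n + 2) = a (n + 2) * B (n + 1) + B n)
(Δ Ω : ℕ → ℤ)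
    (hΔ : ∀ m, Δ m = A m ^ 2 - (N : ℤ) * B m ^ 2)
    (hΩ : ∀ m, 1 ≤ m → Ω m = A m * A (m - 1) - (N : ℤ) * B m * B (m - 1))
(τ : ℕ) (hτpos : 0 < τ)
    (hper : ∀ n, 1 ≤ n → a (n + τ) = a n ∧ c (n + τ) = c n ∧ r (n + τ) = r n)
    (hmin : ∀ t, 0 < t →
      (∀ n, 1 ≤ n → a (n + t) = a n ∧ c (n + t) = c n ∧ r (n + t) = r n) → τ ≤ t) :
    (Even τ → ∀ m, 1 ≤ m → Δ (m + τ) = Δ m ∧ Ω (m + τ) = Ω m) ∧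
    (Odd τ → ∀ m, 1 ≤ m → Δ (m + 2 * τ) = Δ m ∧ Ω (m + 2 * τ) = Ω m) :=
  stmt_11_general N hns a c r hc0 hr0 hc hr A B hA0 hB0 hA1 hB1 hArec hBrec Δ Ω hΔ hΩ τ hper
end

section
/- If the period τ of the continued fraction of √N is even, then Ω_{τ-1} = -a_0, Ω_τ = a_0, and Δ_τ = Δ_{τ-2}, where a_0 = ⌊√N⌋. -/
/-!
Write `c m`, `r m` for the numerator and denominator of the `m`-th complete quotient
`(c m + √N) / r m` of `√N`. These quotients stay reduced, so every division in the algorithm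
is exact, `r m * r (m + 1) = N - c (m + 1) ^ 2`, and induction on the convergents then gives
`Δ m = (-1) ^ (m + 1) * r m` and `Ω (m + 1) = (-1) ^ (m + 1) * c (m + 1)`.
Periodicity from index `1` on forces `r τ = r 0` and `c τ = a 0`; then `r (τ - 1) * r 0 = r 0`,
so `r (τ - 1) = 1`, reducedness forces `c (τ - 1) = a 0`, and finally `r (τ - 2) = r 0`.
For even `τ` the signs give the three identities.
-/

/-- For `s = ⌊√N⌋`, this says that `(c + √N) / r` is a reduced quadratic irrational
(greater than `1`, with conjugate in `(-1, 0)`) whose denominator divides `N - c ^ 2`. -/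
structure IsReducedQuotient_s13 (N s c r : ℤ) : Prop where
  r_pos : 0 < r
  c_le : c ≤ s
  lt_add : s < c + r
  le_add : r ≤ s + c
  dvd : r ∣ N - c ^ 2

namespace IsReducedQuotient_s13

variable {N s c r : ℤ}

theorem init (hlo : s ^ 2 < N) (hhi : N < (s + 1) ^ 2) : IsReducedQuotient_s13 N s s (N - s ^ 2) where
  r_pos := by linarith
  c_le := le_rfl
  lt_add := by linarith
  le_add := by nlinarith
  dvd := dvd_rfl

theorem c_eq_of_r_eq_one (h : IsReducedQuotient_s13 N s c 1) : c = s := by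
  have := h.lt_add
  have := h.c_le
  omega

theorem next_s13 (hlo : s ^ 2 < N) (hhi : N < (s + 1) ^ 2) (h : IsReducedQuotient_s13 N s c r) :
    let c' := (s + c).fdiv r * r - c
    r * (N - c' ^ 2).fdiv r = N - c' ^ 2 ∧ IsReducedQuotient_s13 N s c' ((N - c' ^ 2).fdiv r) := by
  intro c'
  obtain ⟨hr, hcs, hsc, hrs, hdvd⟩ := h
  set q := (s + c).fdiv r with hq
  have hq_le : q * r ≤ s + c := by
    rw [hq, Int.fdiv_eq_ediv_of_nonneg _ hr.le]
    exact Int.ediv_mul_le _ hr.ne'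
  have hq_gt : s + c < q * r + r := by
    rw [hq, Int.fdiv_eq_ediv_of_nonneg _ hr.le]
    linarith [Int.lt_ediv_add_one_mul_self (s + c) hr]
  have hq_pos : 1 ≤ q := by
    by_contra! hq
    nlinarith
  have hdvd' : r ∣ N - c' ^ 2 := by
    have : N - c' ^ 2 = N - c ^ 2 + r * (q * (2 * c - q * r)) := by ring
    rw [this]
    exact dvd_add hdvd (dvd_mul_right _ _)
  have hmul : r * (N - c' ^ 2).fdiv r = N - c' ^ 2 := by
    rw [Int.fdiv_eq_ediv_of_nonneg _ hr.le]
    exact Int.mul_ediv_cancel' hdvd'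
  set r' := (N - c' ^ 2).fdiv r
  have hc's : c' ≤ s := by linarith
  have hrs' : r ≤ s + c' := by nlinarith
  have hr' : 0 < r' := by nlinarith
  -- otherwise `r * r' ≤ (s + c') * (s - c') < N - c' ^ 2`
  have hsr' : s < c' + r' := by
    by_contra! h
    nlinarith
  -- otherwise `r * r' ≥ (s + 1 - c') * (s + 1 + c') > N - c' ^ 2`
  have hr's : r' ≤ s + c' := by
    by_contra! h
    nlinarith
  exact ⟨hmul, hr', hc's, hsr', hr's, ⟨r, by rw [← hmul, mul_comm]⟩⟩

end IsReducedQuotient_s13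

structure IsSqrtExpansion (N : ℤ) (a c r : ℕ → ℤ) : Prop where
  c_zero : c 0 = a 0
  r_zero : r 0 = N - a 0 ^ 2
  a_succ : ∀ m, a (m + 1) = (a 0 + c m).fdiv (r m)
  c_succ : ∀ m, c (m + 1) = a (m + 1) * r m - c m
  r_succ : ∀ m, r (m + 1) = (N - c (m + 1) ^ 2).fdiv (r m)

structure IsConvergents (a A B : ℕ → ℤ) : Prop where
  A_zero : A 0 = a 0
  B_zero : B 0 = 1
  A_one : A 1 = a 1 * a 0 + 1
  B_one : B 1 = a 1
  A_add_two : ∀ n, A (n + 2) = a (n + 2) * A (n + 1) + A n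
  B_add_two : ∀ n, B (n + 2) = a (n + 2) * B (n + 1) + B n

namespace IsSqrtExpansion

variable {N : ℤ} {a c r A B : ℕ → ℤ}

theorem isReducedQuotient (hE : IsSqrtExpansion N a c r) (hlo : a 0 ^ 2 < N)
    (hhi : N < (a 0 + 1) ^ 2) (m : ℕ) : IsReducedQuotient_s13 N (a 0) (c m) (r m) := by
  induction m with
  | zero =>
    rw [hE.c_zero, hE.r_zero]
    exact IsReducedQuotient_s13.init hlo hhi
  | succ m ih =>
    rw [hE.r_succ, hE.c_succ, hE.a_succ]
    exact (ih.next_s13 hlo hhi).2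

theorem r_ne_zero (hE : IsSqrtExpansion N a c r) (hlo : a 0 ^ 2 < N)
    (hhi : N < (a 0 + 1) ^ 2) (m : ℕ) : r m ≠ 0 :=
  (hE.isReducedQuotient hlo hhi m).r_pos.ne'

theorem r_mul_r_succ (hE : IsSqrtExpansion N a c r) (hlo : a 0 ^ 2 < N)
    (hhi : N < (a 0 + 1) ^ 2) (m : ℕ) : r m * r (m + 1) = N - c (m + 1) ^ 2 := by
  rw [hE.r_succ, hE.c_succ, hE.a_succ]
  exact ((hE.isReducedQuotient hlo hhi m).next_s13 hlo hhi).1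

theorem r_add_two (hE : IsSqrtExpansion N a c r) (hlo : a 0 ^ 2 < N)
    (hhi : N < (a 0 + 1) ^ 2) (m : ℕ) :
    r (m + 2) = r m + 2 * a (m + 2) * c (m + 1) - a (m + 2) ^ 2 * r (m + 1) := by
  refine mul_left_cancel₀ (hE.r_ne_zero hlo hhi (m + 1)) ?_
  linear_combination hE.r_mul_r_succ hlo hhi (m + 1) - hE.r_mul_r_succ hlo hhi m
    - (c (m + 2) + a (m + 2) * r (m + 1) - c (m + 1)) * hE.c_succ (m + 1)

theorem norm_convergent_and_cross_eq (hE : IsSqrtExpansion N a c r) (hC : IsConvergents a A B)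
    (hlo : a 0 ^ 2 < N) (hhi : N < (a 0 + 1) ^ 2) (m : ℕ) :
    A m ^ 2 - N * B m ^ 2 = (-1) ^ (m + 1) * r m ∧
      A (m + 1) * A m - N * B (m + 1) * B m = (-1) ^ (m + 1) * c (m + 1) := by
  suffices h : A m ^ 2 - N * B m ^ 2 = (-1) ^ (m + 1) * r m ∧
      A (m + 1) * A m - N * B (m + 1) * B m = (-1) ^ (m + 1) * c (m + 1) ∧
      A (m + 1) ^ 2 - N * B (m + 1) ^ 2 = (-1) ^ (m + 2) * r (m + 1) from ⟨h.1, h.2.1⟩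
  induction m with
  | zero =>
    refine ⟨by rw [hC.A_zero, hC.B_zero, hE.r_zero]; ring, ?_, ?_⟩
    · rw [hC.A_one, hC.B_one, hC.A_zero, hC.B_zero, hE.c_succ, hE.c_zero, hE.r_zero]
      ring
    · have h := hE.r_mul_r_succ hlo hhi 0
      rw [hE.c_succ, hE.c_zero] at h
      refine mul_left_cancel₀ (hE.r_ne_zero hlo hhi 0) ?_
      rw [hC.A_one, hC.B_one]
      linear_combination -h + (r 0 * a 1 ^ 2 + 1) * hE.r_zero
  | succ m ih =>
    obtain ⟨hD, hO, hD₁⟩ := ih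
    have hO₁ : A (m + 2) * A (m + 1) - N * B (m + 2) * B (m + 1) =
        (-1) ^ (m + 2) * c (m + 2) := by
      rw [hC.A_add_two, hC.B_add_two, hE.c_succ (m + 1)]
      simp only [pow_succ] at hD₁ hO ⊢
      linear_combination a (m + 2) * hD₁ + hO
    refine ⟨hD₁, hO₁, ?_⟩
    rw [hC.A_add_two, hC.B_add_two, hE.r_add_two hlo hhi]
    simp only [pow_succ] at hD hO hD₁ ⊢
    linear_combination a (m + 2) ^ 2 * hD₁ + 2 * a (m + 2) * hO + hD

theorem r_mul_r_succ_of_c_succ_eq (hE : IsSqrtExpansion N a c r) (hlo : a 0 ^ 2 < N)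
    (hhi : N < (a 0 + 1) ^ 2) {m : ℕ} (hc : c (m + 1) = a 0) : r m * r (m + 1) = r 0 := by
  rw [hE.r_mul_r_succ hlo hhi, hc, hE.r_zero]

theorem c_eq_and_r_eq_of_period (hE : IsSqrtExpansion N a c r) (hlo : a 0 ^ 2 < N)
    (hhi : N < (a 0 + 1) ^ 2) {p : ℕ} (ha : a (p + 1) = a 1) (hc : c (p + 1) = c 1)
    (hr : r (p + 1) = r 1) : c p = a 0 ∧ r p = r 0 := by
  have hrp : r p = r 0 := by
    refine mul_right_cancel₀ (hE.r_ne_zero hlo hhi 1) ?_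
    have h := hE.r_mul_r_succ hlo hhi p
    rwa [hr, hc, ← hE.r_mul_r_succ hlo hhi 0] at h
  refine ⟨?_, hrp⟩
  have h := hE.c_succ p
  rw [ha, hc, hrp, hE.c_succ 0, hE.c_zero] at h
  linarith

end IsSqrtExpansion

theorem sq_sqrt_lt_of_not_isSquare {N : ℕ} (h : ¬ IsSquare N) : Nat.sqrt N ^ 2 < N :=
  (Nat.sqrt_le' N).lt_of_ne fun h' => h ⟨Nat.sqrt N, by rw [← sq, h']⟩

theorem stmt_13_general
(N : ℕ) (hns : ¬ IsSquare N)
    (a c r : ℕ → ℤ)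
    (ha0 : a 0 = (Nat.sqrt N : ℤ)) (hc0 : c 0 = a 0) (hr0 : r 0 = (N : ℤ) - a 0 ^ 2)
    (ha : ∀ m, a (m + 1) = (a 0 + c m).fdiv (r m))
    (hc : ∀ m, c (m + 1) = a (m + 1) * r m - c m)
    (hr : ∀ m, r (m + 1) = ((N : ℤ) - c (m + 1) ^ 2).fdiv (r m))
(A B : ℕ → ℤ)
    (hA0 : A 0 = a 0) (hB0 : B 0 = 1)
    (hA1 : A 1 = a 1 * a 0 + 1) (hB1 : B 1 = a 1)
    (hArec : ∀ n, A (n + 2) = a (n + 2) * A (n + 1) + A n)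
    (hBrec : ∀ n, B (n + 2) = a (n + 2) * B (n + 1) + B n)
(Δ Ω : ℕ → ℤ)
    (hΔ : ∀ m, Δ m = A m ^ 2 - (N : ℤ) * B m ^ 2)
    (hΩ : ∀ m, 1 ≤ m → Ω m = A m * A (m - 1) - (N : ℤ) * B m * B (m - 1))
(τ : ℕ) (hτpos : 0 < τ)
    (hper : ∀ n, 1 ≤ n → a (n + τ) = a n ∧ c (n + τ) = c n ∧ r (n + τ) = r n)
    (heven : Even τ) :
    Ω (τ - 1) = -(a 0) ∧ Ω τ = a 0 ∧ Δ τ = Δ (τ - 2) := by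
  have hE : IsSqrtExpansion N a c r := ⟨hc0, hr0, ha, hc, hr⟩
  have hC : IsConvergents a A B := ⟨hA0, hB0, hA1, hB1, hArec, hBrec⟩
  have hlo : a 0 ^ 2 < (N : ℤ) := by rw [ha0]; exact_mod_cast sq_sqrt_lt_of_not_isSquare hns
  have hhi : (N : ℤ) < (a 0 + 1) ^ 2 := by rw [ha0]; exact_mod_cast Nat.lt_succ_sqrt' N
  have hΩ' (m : ℕ) : Ω (m + 1) = A (m + 1) * A m - N * B (m + 1) * B m := hΩ (m + 1) m.succ_pos
  have hid := hE.norm_convergent_and_cross_eq hC hlo hhi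
  obtain ⟨j, rfl⟩ : ∃ j, τ = j + 2 := ⟨τ - 2, by obtain ⟨k, hk⟩ := heven; omega⟩
  have hj : Even j := by simpa [parity_simps] using heven
  obtain ⟨ha₁, hc₁, hr₁⟩ := add_comm 1 (j + 2) ▸ hper 1 le_rfl
  obtain ⟨hcτ, hrτ⟩ := hE.c_eq_and_r_eq_of_period hlo hhi ha₁ hc₁ hr₁
  have hr_pred : r (j + 1) = 1 := by
    refine mul_right_cancel₀ (hE.r_ne_zero hlo hhi 0) ?_
    rw [← hrτ, hE.r_mul_r_succ_of_c_succ_eq hlo hhi hcτ, hrτ, one_mul]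
  have hc_pred : c (j + 1) = a 0 :=
    (hr_pred ▸ hE.isReducedQuotient hlo hhi (j + 1)).c_eq_of_r_eq_one
  have hr_pred_pred : r j = r 0 := by
    simpa [hr_pred] using hE.r_mul_r_succ_of_c_succ_eq hlo hhi hc_pred
  refine ⟨?_, ?_, ?_⟩
  · rw [show j + 2 - 1 = j + 1 from rfl, hΩ', (hid j).2, hc_pred]
    simp [pow_succ, hj.neg_one_pow]
  · rw [hΩ', (hid (j + 1)).2, hcτ]
    simp [pow_succ, hj.neg_one_pow]
  · rw [show j + 2 - 2 = j from rfl, hΔ, hΔ, (hid (j + 2)).1, (hid j).1, hrτ, hr_pred_pred]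
    simp [pow_succ, hj.neg_one_pow]

theorem stmt_13
(N : ℕ) (hN : 0 < N) (hns : ¬ IsSquare N)
    (a c r : ℕ → ℤ)
    (ha0 : a 0 = (Nat.sqrt N : ℤ)) (hc0 : c 0 = a 0) (hr0 : r 0 = (N : ℤ) - a 0 ^ 2)
    (ha : ∀ m, a (m + 1) = (a 0 + c m).fdiv (r m))
    (hc : ∀ m, c (m + 1) = a (m + 1) * r m - c m)
    (hr : ∀ m, r (m + 1) = ((N : ℤ) - c (m + 1) ^ 2).fdiv (r m))
(A B : ℕ → ℤ)
    (hA0 : A 0 = a 0) (hB0 : B 0 = 1)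
    (hA1 : A 1 = a 1 * a 0 + 1) (hB1 : B 1 = a 1)
    (hArec : ∀ n, A (n + 2) = a (n + 2) * A (n + 1) + A n)
    (hBrec : ∀ n, B (n + 2) = a (n + 2) * B (n + 1) + B n)
(Δ Ω : ℕ → ℤ)
    (hΔ : ∀ m, Δ m = A m ^ 2 - (N : ℤ) * B m ^ 2)
    (hΩ : ∀ m, 1 ≤ m → Ω m = A m * A (m - 1) - (N : ℤ) * B m * B (m - 1))
(τ : ℕ) (hτpos : 0 < τ)
    (hper : ∀ n, 1 ≤ n → a (n + τ) = a n ∧ c (n + τ) = c n ∧ r (n + τ) = r n)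
    (hmin : ∀ t, 0 < t →
      (∀ n, 1 ≤ n → a (n + t) = a n ∧ c (n + t) = c n ∧ r (n + t) = r n) → τ ≤ t)
    (heven : Even τ) :
    Ω (τ - 1) = -(a 0) ∧ Ω τ = a 0 ∧ Δ τ = Δ (τ - 2) :=
  stmt_13_general N hns a c r ha0 hc0 hr0 ha hc hr A B hA0 hB0 hA1 hB1 hArec hBrec Δ Ω hΔ hΩ τ hτpos
    hper heven
end
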